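/- arXiv:1012.2824 — 3 statements merged into one kernel-verified Lean document; each statement's English description precedes it below -/
import Mathlib

section
/- For a groupoid G, the inclusion functor from abelian groups into groupoids (viewing an abelian group as a one-object groupoid) has a left adjoint, the universal abelianisation G ↦ G^totab; equivalently, for every groupoid G there is an abelian group G^totab and a morphism υ : G → G^totab universal among morphisms from G to abelian groups. -/
/-!
`G^totab` is the abelianisation of the group presented by one generator `[f]` for each morphism `f`
of `G` and the relations `[f ≫ g] = [f] [g]`. Functors from `G` to a group `A` are exactly
homomorphisms out of this presented group, and homomorphisms from it to an abelian group are
exactly homomorphisms out of its abelianisation.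
-/

open CategoryTheory

universe w v u

/-- A group regarded as a one-object groupoid (with `f ≫ g = f * g`,
following the composition convention of the paper). -/
def GroupAsGroupoid (A : Type*) : Type := Unit

instance (A : Type*) [Group A] : Groupoid (GroupAsGroupoid A) where
  Hom _ _ := A
  id _ := (1 : A)
  comp f g := f * g
  id_comp := one_mul
  comp_id := mul_one
  assoc := mul_assoc
  inv f := f⁻¹
  inv_comp := inv_mul_cancel
  comp_inv := mul_inv_cancel

/-- A morphism in `GroupAsGroupoid A`, regarded as an element of the group `A`. -/
def toGrp {A : Type*} [Group A] {a b : GroupAsGroupoid A} (f : a ⟶ b) : A := f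

namespace GroupAsGroupoid

variable {A : Type*} [Group A]

@[simp]
theorem toGrp_comp {a b c : GroupAsGroupoid A} (f : a ⟶ b) (g : b ⟶ c) :
    toGrp (f ≫ g) = toGrp f * toGrp g :=
  rfl

variable {C : Type u} [Category.{v} C]

/-- Multiplicativity on composable pairs already forces `φ (𝟙 a) = 1`, since `A` is a group. -/
def mkFunctor (φ : ∀ {a b : C}, (a ⟶ b) → A)
    (hφ : ∀ {a b c : C} (f : a ⟶ b) (g : b ⟶ c), φ (f ≫ g) = φ f * φ g) :
    C ⥤ GroupAsGroupoid A where
  obj _ := ()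
  map f := φ f
  map_id a := show φ (𝟙 a) = 1 by simpa using hφ (𝟙 a) (𝟙 a)
  map_comp f g := hφ f g

@[simp]
theorem toGrp_mkFunctor_map (φ : ∀ {a b : C}, (a ⟶ b) → A)
    (hφ : ∀ {a b c : C} (f : a ⟶ b) (g : b ⟶ c), φ (f ≫ g) = φ f * φ g) {a b : C} (f : a ⟶ b) :
    toGrp ((mkFunctor φ hφ).map f) = φ f :=
  rfl

end GroupAsGroupoid

section

variable (C : Type u) [Category.{v} C]

def UniversalGroup.rels : Set (FreeGroup (Σ a b : C, a ⟶ b)) :=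
  { r | ∃ (a b c : C) (f : a ⟶ b) (g : b ⟶ c),
      r = FreeGroup.of ⟨a, c, f ≫ g⟩ * (FreeGroup.of ⟨a, b, f⟩ * FreeGroup.of ⟨b, c, g⟩)⁻¹ }

abbrev UniversalGroup : Type (max u v) := PresentedGroup (UniversalGroup.rels C)

namespace UniversalGroup

variable {C}

def of {a b : C} (f : a ⟶ b) : UniversalGroup C := PresentedGroup.of ⟨a, b, f⟩

theorem of_comp {a b c : C} (f : a ⟶ b) (g : b ⟶ c) : of (f ≫ g) = of f * of g :=
  (PresentedGroup.mk_eq_mk_of_mul_inv_mem (rels := rels C) (x := FreeGroup.of ⟨a, c, f ≫ g⟩)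
    (y := FreeGroup.of ⟨a, b, f⟩ * FreeGroup.of ⟨b, c, g⟩) ⟨a, b, c, f, g, rfl⟩).trans (map_mul _ _ _)

variable {A : Type w} [Group A]

def lift (Φ : C ⥤ GroupAsGroupoid A) : UniversalGroup C →* A :=
  PresentedGroup.toGroup (f := fun m => toGrp (Φ.map m.2.2)) <| by
    rintro _ ⟨a, b, c, f, g, rfl⟩
    simp

@[simp]
theorem lift_of (Φ : C ⥤ GroupAsGroupoid A) {a b : C} (f : a ⟶ b) :
    lift Φ (of f) = toGrp (Φ.map f) :=
  PresentedGroup.toGroup.of _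

theorem hom_ext {φ ψ : UniversalGroup C →* A} (h : ∀ {a b : C} (f : a ⟶ b), φ (of f) = ψ (of f)) :
    φ = ψ :=
  PresentedGroup.ext fun ⟨_, _, f⟩ => h f

end UniversalGroup

end

/-- every groupoid `G` admits a universal abelianisation: an abelian group
`G^totab` together with a morphism (functor) `υ : G → G^totab` which is universal among
morphisms from `G` to abelian groups; i.e. the inclusion of abelian groups into groupoids
has a left adjoint. -/
theorem stmt5 (G : Type u) [Groupoid.{v} G] :
    ∃ (T : Type (max u v)) (_ : CommGroup T) (υ : G ⥤ GroupAsGroupoid T),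
      ∀ (A : Type w) (_ : CommGroup A) (Φ : G ⥤ GroupAsGroupoid A),
        ∃! f : T →* A, ∀ {a b : G} (m : a ⟶ b), toGrp (Φ.map m) = f (toGrp (υ.map m)) := by
  refine ⟨Abelianization (UniversalGroup G), inferInstance,
    GroupAsGroupoid.mkFunctor (fun f => Abelianization.of (UniversalGroup.of f))
      (fun f g => by simp [UniversalGroup.of_comp]),
    fun A _ Φ => ⟨Abelianization.lift (UniversalGroup.lift Φ), fun m => by simp, ?_⟩⟩
  intro φ hφ
  refine Abelianization.hom_ext _ _ (UniversalGroup.hom_ext fun m => ?_)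
  simpa using (hφ m).symm
end

section
/- Let G be a connected (transitive) groupoid, a₀ an object of G, and T a wide tree subgroupoid of G. Then the universal abelianisation G^totab is isomorphic to the direct sum of the abelianisation of the vertex group G(a₀) and the free abelian group on the objects of G other than a₀. -/
/-
Write `t a b` for the tree arrow from `a` to `b`. Conjugating by tree arrows sends
`m : a ⟶ b` to the loop `t a₀ a ≫ m ≫ t b a₀` at `a₀`, and recording `b - a` in the free
abelian group on the objects (with `a₀ ↦ 0`) gives a functor `Φ` from `G` to
`G(a₀)ᵃᵇ × ℤ[Ob G ∖ {a₀}]`. Conversely, every functor `Ψ` into an abelian group induces a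
homomorphism out of that product, sending a loop to its image and the generator `a` to
`Ψ (t a₀ a)`; it recovers `Ψ` from `Φ`, and `Φ` hits the generators of both factors. Hence
`Φ` is itself universal, and universal abelianisations are unique up to isomorphism.
-/

open CategoryTheory

universe v u

section FunctorToGroup

variable {G : Type u} [Groupoid.{v} G] {A : Type*} [Group A] (F : G ⥤ GroupAsGroupoid A)

lemma toGrp_map_comp {a b c : G} (f : a ⟶ b) (g : b ⟶ c) :
    toGrp (F.map (f ≫ g)) = toGrp (F.map f) * toGrp (F.map g) := by
  rw [F.map_comp]; rfl

lemma toGrp_map_id (a : G) : toGrp (F.map (𝟙 a)) = 1 := by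
  rw [F.map_id]; rfl

def vertexHom (a : G) : (a ⟶ a) →* A where
  toFun m := toGrp (F.map m)
  map_one' := toGrp_map_id F a
  map_mul' := toGrp_map_comp F

end FunctorToGroup

namespace CategoryTheory.Subgroupoid

variable {G : Type u} [Groupoid.{v} G]

def IsWideTree (S : Subgroupoid G) : Prop := ∀ a b : G, ∃! f : a ⟶ b, f ∈ S.arrows a b

namespace IsWideTree

variable {S : Subgroupoid G} (hS : S.IsWideTree)

noncomputable def arrow (a b : G) : a ⟶ b := (hS a b).exists.choose

lemma arrow_mem (a b : G) : hS.arrow a b ∈ S.arrows a b := (hS a b).exists.choose_spec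

lemma arrow_comp (a b c : G) : hS.arrow a b ≫ hS.arrow b c = hS.arrow a c :=
  (hS a c).unique (S.mul (hS.arrow_mem a b) (hS.arrow_mem b c)) (hS.arrow_mem a c)

lemma arrow_self (a : G) : hS.arrow a a = 𝟙 a :=
  (hS a a).unique (hS.arrow_mem a a) (S.id_mem_of_src (hS.arrow_mem a a))

lemma arrow_comp_arrow_self (a b : G) : hS.arrow a b ≫ hS.arrow b a = 𝟙 a := by
  rw [arrow_comp, arrow_self]

end IsWideTree

end CategoryTheory.Subgroupoid

section BasisOrZero

variable {X : Type*} (x₀ : X)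

open Classical in
noncomputable def basisOrZero (x : X) : FreeAbelianGroup {x : X // x ≠ x₀} :=
  if h : x = x₀ then 0 else .of ⟨x, h⟩

@[simp]
lemma basisOrZero_self : basisOrZero x₀ x₀ = 0 := dif_pos rfl

lemma basisOrZero_of_ne {x : X} (h : x ≠ x₀) : basisOrZero x₀ x = .of ⟨x, h⟩ := dif_neg h

end BasisOrZero

namespace CategoryTheory.Groupoid

/-- The paper's `G(a₀)ᵃᵇ ⊕ ℤ[Ob G ∖ {a₀}]`, written multiplicatively. -/
abbrev TotAb {G : Type u} [Groupoid.{v} G] (a₀ : G) : Type (max u v) :=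
  Abelianization (a₀ ⟶ a₀) × Multiplicative (FreeAbelianGroup {a : G // a ≠ a₀})

end CategoryTheory.Groupoid

namespace CategoryTheory.Subgroupoid.IsWideTree

open Groupoid

variable {G : Type u} [Groupoid.{v} G] {S : Subgroupoid G} (hS : S.IsWideTree) (a₀ : G)

noncomputable def toTotAb : G ⥤ GroupAsGroupoid (TotAb a₀) where
  obj _ := ()
  map {a b} m := ((Abelianization.of (hS.arrow a₀ a ≫ m ≫ hS.arrow b a₀),
      .ofAdd (basisOrZero a₀ b - basisOrZero a₀ a)) : TotAb a₀)
  map_id a := by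
    show (_, _) = ((1, 1) : TotAb a₀)
    rw [Category.id_comp, arrow_comp_arrow_self, sub_self]
    exact Prod.ext (map_one _) rfl
  map_comp {a b c} m n := by
    have hloop : hS.arrow a₀ a ≫ (m ≫ n) ≫ hS.arrow c a₀ =
        (hS.arrow a₀ a ≫ m ≫ hS.arrow b a₀) ≫ (hS.arrow a₀ b ≫ n ≫ hS.arrow c a₀) := by
      simp only [Category.assoc]
      rw [← Category.assoc (hS.arrow b a₀), arrow_comp_arrow_self, Category.id_comp]
    show (_, _) = ((_ * _, _ * _) : TotAb a₀)
    rw [hloop]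
    exact Prod.ext (map_mul _ _ _) (congrArg Multiplicative.ofAdd (sub_add_sub_cancel' _ _ _).symm)

lemma toGrp_toTotAb_map {a b : G} (m : a ⟶ b) :
    toGrp ((hS.toTotAb a₀).map m) = (Abelianization.of (hS.arrow a₀ a ≫ m ≫ hS.arrow b a₀),
      .ofAdd (basisOrZero a₀ b - basisOrZero a₀ a)) := rfl

lemma toGrp_toTotAb_map_of_loop (m : a₀ ⟶ a₀) :
    toGrp ((hS.toTotAb a₀).map m) = (Abelianization.of m, 1) := by
  rw [toGrp_toTotAb_map, arrow_self, Category.id_comp, Category.comp_id, sub_self]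
  rfl

lemma toGrp_toTotAb_map_arrow (a : G) :
    toGrp ((hS.toTotAb a₀).map (hS.arrow a₀ a)) = (1, .ofAdd (basisOrZero a₀ a)) := by
  rw [toGrp_toTotAb_map, arrow_self, Category.id_comp, arrow_comp_arrow_self, basisOrZero_self,
    sub_zero]
  exact Prod.ext (map_one _) rfl

variable {B : Type*} [CommGroup B]

noncomputable def liftTotAb (Ψ : G ⥤ GroupAsGroupoid B) : TotAb a₀ →* B :=
  (Abelianization.lift (vertexHom Ψ a₀)).coprod <| AddMonoidHom.toMultiplicativeLeft <|
    FreeAbelianGroup.lift fun a => Additive.ofMul (toGrp (Ψ.map (hS.arrow a₀ a.1)))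

lemma liftTotAb_of (Ψ : G ⥤ GroupAsGroupoid B) (m : a₀ ⟶ a₀) :
    hS.liftTotAb a₀ Ψ (Abelianization.of m, 1) = toGrp (Ψ.map m) := by
  simp [liftTotAb, vertexHom]

lemma liftTotAb_basisOrZero (Ψ : G ⥤ GroupAsGroupoid B) (a : G) :
    hS.liftTotAb a₀ Ψ (1, .ofAdd (basisOrZero a₀ a)) = toGrp (Ψ.map (hS.arrow a₀ a)) := by
  by_cases h : a = a₀
  · subst h
    rw [basisOrZero_self, arrow_self, toGrp_map_id]
    exact map_one _
  · rw [basisOrZero_of_ne a₀ h]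
    simp [liftTotAb]

lemma liftTotAb_toTotAb_map (Ψ : G ⥤ GroupAsGroupoid B) {a b : G} (m : a ⟶ b) :
    hS.liftTotAb a₀ Ψ (toGrp ((hS.toTotAb a₀).map m)) = toGrp (Ψ.map m) := by
  have hsplit : toGrp ((hS.toTotAb a₀).map m) =
      (Abelianization.of (hS.arrow a₀ a ≫ m ≫ hS.arrow b a₀), 1) *
        (1, .ofAdd (basisOrZero a₀ b)) / (1, .ofAdd (basisOrZero a₀ a)) := by
    rw [toGrp_toTotAb_map]
    exact Prod.ext (by simp) (by simp [ofAdd_sub, div_eq_mul_inv])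
  calc hS.liftTotAb a₀ Ψ (toGrp ((hS.toTotAb a₀).map m))
      = toGrp (Ψ.map (hS.arrow a₀ a ≫ m ≫ hS.arrow b a₀ ≫ hS.arrow a₀ b)) /
          toGrp (Ψ.map (hS.arrow a₀ a)) := by
        rw [hsplit, map_div, map_mul, liftTotAb_of, liftTotAb_basisOrZero, liftTotAb_basisOrZero,
          ← toGrp_map_comp]
        simp only [Category.assoc]
    _ = toGrp (Ψ.map m) := by
        rw [arrow_comp_arrow_self, Category.comp_id, toGrp_map_comp, mul_div_cancel_left]

lemma toTotAb_hom_ext {φ ψ : TotAb a₀ →* B}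
    (h : ∀ {a b : G} (m : a ⟶ b),
      φ (toGrp ((hS.toTotAb a₀).map m)) = ψ (toGrp ((hS.toTotAb a₀).map m))) :
    φ = ψ := by
  rw [← MonoidHom.coprod_unique φ, ← MonoidHom.coprod_unique ψ]
  congr 1
  · apply Abelianization.hom_ext
    ext m
    simpa [toGrp_toTotAb_map_of_loop] using h m
  · ext ⟨a, ha⟩
    simpa [toGrp_toTotAb_map_arrow, basisOrZero_of_ne a₀ ha] using h (hS.arrow a₀ a)

end CategoryTheory.Subgroupoid.IsWideTree

theorem stmt6_general (G : Type u) [Groupoid.{v} G]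
    (a₀ : G)
    (S : Subgroupoid G) (htree : ∀ a b : G, ∃! f : a ⟶ b, f ∈ S.arrows a b)
    -- (T, υ) is the universal abelianisation of G:
    (T : Type (max u v)) [CommGroup T] (υ : G ⥤ GroupAsGroupoid T)
    (huniv : ∀ (A : Type (max u v)) (_ : CommGroup A) (Φ : G ⥤ GroupAsGroupoid A),
      ∃! f : T →* A, ∀ {a b : G} (m : a ⟶ b), toGrp (Φ.map m) = f (toGrp (υ.map m))) :
    Nonempty
      (T ≃* Abelianization (a₀ ⟶ a₀) ×
        Multiplicative (FreeAbelianGroup {a : G // a ≠ a₀})) := by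
  have hS : S.IsWideTree := htree
  obtain ⟨f, hf, -⟩ := huniv _ inferInstance (hS.toTotAb a₀)
  obtain ⟨_, -, hυ⟩ := huniv T inferInstance υ
  let g := hS.liftTotAb a₀ υ
  have hgf : g.comp f = MonoidHom.id T :=
    (hυ _ fun m => by rw [MonoidHom.comp_apply, ← hf, hS.liftTotAb_toTotAb_map]).trans
      (hυ _ fun _ => rfl).symm
  have hfg : f.comp g = MonoidHom.id _ :=
    hS.toTotAb_hom_ext a₀ fun m => by
      rw [MonoidHom.comp_apply, hS.liftTotAb_toTotAb_map, ← hf, MonoidHom.id_apply]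
  exact ⟨f.toMulEquiv g hgf hfg⟩

/-- if `G` is a transitive (connected) groupoid, `a₀` an object of `G` and `S`
a wide tree subgroupoid of `G` (exactly one arrow of `S` between any two objects), then the
universal abelianisation `G^totab` of `G` is isomorphic to the direct sum of the
abelianisation of the vertex group `G(a₀)` and the free abelian group on the objects of `G`
other than `a₀`. -/
theorem stmt6 (G : Type u) [Groupoid.{v} G]
    (htrans : ∀ a b : G, Nonempty (a ⟶ b)) (a₀ : G)
    (S : Subgroupoid G) (htree : ∀ a b : G, ∃! f : a ⟶ b, f ∈ S.arrows a b)
    -- (T, υ) is the universal abelianisation of G: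
    (T : Type (max u v)) [CommGroup T] (υ : G ⥤ GroupAsGroupoid T)
    (huniv : ∀ (A : Type (max u v)) (_ : CommGroup A) (Φ : G ⥤ GroupAsGroupoid A),
      ∃! f : T →* A, ∀ {a b : G} (m : a ⟶ b), toGrp (Φ.map m) = f (toGrp (υ.map m))) :
    Nonempty
      (T ≃* Abelianization (a₀ ⟶ a₀) ×
        Multiplicative (FreeAbelianGroup {a : G // a ≠ a₀})) :=
  stmt6_general G a₀ S htree T υ huniv
end

section
/- Let φ : F → G be a surjective group morphism with kernel N, and let F̂ be the pullback of the universal covering groupoid of G along φ. Then there is an isomorphism of abelian groups F̂^totab ≅ N^ab ⊕ A, where A is the free abelian group on the set G \ {1}; moreover A is isomorphic as a G-module to the augmentation ideal IG via the identification of the basis element at g with g − 1. -/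
/-!
Fix a section `s` of `φ` with `s 1 = 1`. The morphisms `t_g = s g : g ⟶ 1` form a maximal tree
of `F̂`, and every `m : a ⟶ b` satisfies `m ≫ t_b = t_a ≫ ℓ`, where `ℓ = s(a)⁻¹ m s(b)` is a loop
at `1` with label in `N`. Hence `m ↦ (ℓ, [a] - [b])`, with `[1] = 0`, is a functor to
`N^ab × A` through which every functor to an abelian group factors, uniquely because the
loops and the tree morphisms are sent to generators; so `F̂^totab ≅ N^ab × A`.

The map `[g] ↦ g - 1` is inverted on `IG` by `Σ n_g g ↦ Σ n_g [g]`: the composite sends `x` to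
`x - ε(x)`.
-/

open CategoryTheory

universe u v

open MonoidAlgebra

noncomputable def augM (G : Type*) [Group G] : MonoidAlgebra ℤ G →ₐ[ℤ] ℤ :=
  MonoidAlgebra.lift ℤ ℤ G 1

noncomputable def IG (G : Type*) [Group G] : AddSubgroup (MonoidAlgebra ℤ G) :=
  AddMonoidHom.ker (augM G).toAddMonoidHom

noncomputable def eAug (G : Type*) [Group G] (g : G) : MonoidAlgebra ℤ G :=
  MonoidAlgebra.of ℤ G g - 1

theorem eAug_mem (G : Type*) [Group G] (g : G) : eAug G g ∈ IG G := by
  simp [eAug, IG, augM, AddMonoidHom.mem_ker]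

variable {F : Type u} {G : Type v} [Group F] [Group G]

/-- The pullback `F̂` of the universal covering groupoid of `G` along `φ : F → G`:
objects the elements of `G`, morphisms the pairs `(u, g) : φ(u)g → g` with `u ∈ F`,
`g ∈ G`, composition `(u, φ(v)g)(v, g) = (uv, g)`. -/
def PullbackCover (φ : F →* G) : Type v := G

instance (φ : F →* G) : Groupoid (PullbackCover φ) where
  Hom a b := { u : F // φ u * (show G from b) = show G from a }
  id a := ⟨1, by rw [map_one]; exact one_mul _⟩
  comp {a b c} f g := ⟨f.1 * g.1, by
    have hf := f.2; have hg := g.2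
    rw [map_mul, mul_assoc, hg, hf]⟩
  id_comp f := by apply Subtype.ext; simp
  comp_id f := by apply Subtype.ext; simp
  assoc f g h := by apply Subtype.ext; simp [mul_assoc]
  inv {a b} f := ⟨f.1⁻¹, by
    have h := f.2
    have h2 : (φ f.1)⁻¹ * (φ f.1 * (show G from b)) = show G from b :=
      inv_mul_cancel_left _ _
    rw [h, ← map_inv] at h2
    exact h2⟩
  inv_comp f := by apply Subtype.ext; simp
  comp_inv f := by apply Subtype.ext; simp

noncomputable def ofNeOne {M : Type*} [One M] (g : M) : FreeAbelianGroup {g : M // g ≠ 1} :=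
  open Classical in if h : g = 1 then 0 else FreeAbelianGroup.of ⟨g, h⟩

lemma ofNeOne_one {M : Type*} [One M] : ofNeOne (1 : M) = 0 := by
  rw [ofNeOne, dif_pos rfl]

lemma ofNeOne_of_ne {M : Type*} [One M] {g : M} (h : g ≠ 1) :
    ofNeOne g = FreeAbelianGroup.of ⟨g, h⟩ := by
  rw [ofNeOne, dif_neg h]

lemma exists_section_map_one {φ : F →* G} (hφ : Function.Surjective φ) :
    ∃ s : G → F, (∀ g, φ (s g) = g) ∧ s 1 = 1 := by
  classical
  refine ⟨Function.update (Function.surjInv hφ) 1 1, fun g => ?_, Function.update_self ..⟩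
  by_cases hg : g = 1
  · simp [hg]
  · simp [hg, Function.surjInv_eq hφ]

universe w

section Universal

variable {C : Type*} [Category C]

lemma toGrp_map_comp_s15 {A : Type*} [Group A] (Φ : C ⥤ GroupAsGroupoid A) {a b c : C}
    (f : a ⟶ b) (g : b ⟶ c) : toGrp (Φ.map (f ≫ g)) = toGrp (Φ.map f) * toGrp (Φ.map g) := by
  rw [Φ.map_comp]; rfl

lemma toGrp_map_id_s15 {A : Type*} [Group A] (Φ : C ⥤ GroupAsGroupoid A) (a : C) :
    toGrp (Φ.map (𝟙 a)) = 1 := by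
  rw [Φ.map_id]; rfl

def IsTotAb {T : Type w} [CommGroup T] (υ : C ⥤ GroupAsGroupoid T) : Prop :=
  ∀ (A : Type w) (_ : CommGroup A) (Φ : C ⥤ GroupAsGroupoid A),
    ∃! f : T →* A, ∀ {a b : C} (m : a ⟶ b), toGrp (Φ.map m) = f (toGrp (υ.map m))

theorem IsTotAb.nonempty_mulEquiv {T A : Type w} [CommGroup T] [CommGroup A]
    {υ : C ⥤ GroupAsGroupoid T} (hυ : IsTotAb υ) (Φ : C ⥤ GroupAsGroupoid A) (lift : A →* T)
    (hlift : ∀ {a b : C} (m : a ⟶ b), lift (toGrp (Φ.map m)) = toGrp (υ.map m))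
    (hext : ∀ f : A →* A, (∀ {a b : C} (m : a ⟶ b), f (toGrp (Φ.map m)) = toGrp (Φ.map m)) →
      f = MonoidHom.id A) :
    Nonempty (T ≃* A) := by
  obtain ⟨f, hf, -⟩ := hυ A inferInstance Φ
  obtain ⟨_, -, hunique⟩ := hυ T inferInstance υ
  have hlift_f : lift.comp f = MonoidHom.id T :=
    (hunique _ fun m => by rw [MonoidHom.comp_apply, ← hf, hlift]).trans
      (hunique _ fun _ => rfl).symm
  have hf_lift : f.comp lift = MonoidHom.id A :=
    hext _ fun m => by rw [MonoidHom.comp_apply, hlift, hf]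
  exact ⟨MonoidHom.toMulEquiv f lift hlift_f hf_lift⟩

end Universal

namespace PullbackCover

variable (φ : F →* G) in
abbrev mk (g : G) : PullbackCover φ := g

variable {φ : F →* G}

abbrev base (a : PullbackCover φ) : G := a

def homMk {a b : PullbackCover φ} (u : F) (h : φ u * b.base = a.base) : a ⟶ b := ⟨u, h⟩

def elem {a b : PullbackCover φ} (m : a ⟶ b) : F := m.1

lemma map_elem_mul {a b : PullbackCover φ} (m : a ⟶ b) : φ (elem m) * b.base = a.base := m.2

@[ext] lemma hom_ext {a b : PullbackCover φ} {f g : a ⟶ b} (h : elem f = elem g) : f = g :=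
  Subtype.ext h

@[simp] lemma elem_homMk {a b : PullbackCover φ} (u : F) (h : φ u * b.base = a.base) :
    elem (homMk u h) = u := rfl

@[simp] lemma elem_comp {a b c : PullbackCover φ} (f : a ⟶ b) (g : b ⟶ c) :
    elem (f ≫ g) = elem f * elem g := rfl

@[simp] lemma elem_id (a : PullbackCover φ) : elem (𝟙 a) = 1 := rfl

variable {s : G → F} (hs : ∀ g, φ (s g) = g) (hs1 : s 1 = 1)

def treeHom (g : G) : mk φ g ⟶ mk φ 1 :=
  homMk (s g) (by simp [hs])

variable (φ) in
def kerLoop (n : φ.ker) : mk φ 1 ⟶ mk φ 1 :=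
  homMk n ((mul_one _).trans n.2)

def kerPart {a b : PullbackCover φ} (m : a ⟶ b) : φ.ker :=
  ⟨(s a.base)⁻¹ * elem m * s b.base, by
    rw [MonoidHom.mem_ker, map_mul, map_mul, map_inv, hs, hs, ← map_elem_mul m]
    group⟩

include hs1 in
lemma treeHom_one : treeHom hs 1 = 𝟙 (mk φ 1) := by
  ext; simp [treeHom, hs1]

lemma comp_treeHom {a b : PullbackCover φ} (m : a ⟶ b) :
    m ≫ treeHom hs b.base = treeHom hs a.base ≫ kerLoop φ (kerPart hs m) := by
  ext; simp [treeHom, kerLoop, kerPart, mul_assoc]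

lemma kerPart_id (a : PullbackCover φ) : kerPart hs (𝟙 a) = 1 := by
  ext; simp [kerPart]

lemma kerPart_comp {a b c : PullbackCover φ} (f : a ⟶ b) (g : b ⟶ c) :
    kerPart hs (f ≫ g) = kerPart hs f * kerPart hs g := by
  ext; simp [kerPart, mul_assoc]

include hs1 in
lemma kerPart_kerLoop (n : φ.ker) : kerPart hs (kerLoop φ n) = n := by
  ext; simp [kerPart, kerLoop, hs1]

include hs1 in
lemma kerPart_treeHom (g : G) : kerPart hs (treeHom hs g) = 1 := by
  ext; simp [kerPart, treeHom, hs1]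

variable (φ) in
abbrev TotAb : Type _ :=
  Abelianization φ.ker × Multiplicative (FreeAbelianGroup {g : G // g ≠ 1})

noncomputable def toTotAb : PullbackCover φ ⥤ GroupAsGroupoid (TotAb φ) where
  obj _ := ⟨⟩
  map {a b} m := show TotAb φ from
    (Abelianization.of (kerPart hs m), .ofAdd (ofNeOne a.base - ofNeOne b.base))
  map_id a := by
    change (_, _) = ((1, 1) : TotAb φ)
    rw [kerPart_id, map_one, sub_self, ofAdd_zero]
  map_comp {a b c} f g := by
    change (_, _) = ((_, _) * (_, _) : TotAb φ)
    rw [Prod.mk_mul_mk, kerPart_comp, map_mul, ← ofAdd_add, sub_add_sub_cancel]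

lemma toGrp_toTotAb_map {a b : PullbackCover φ} (m : a ⟶ b) :
    toGrp ((toTotAb hs).map m) =
      (Abelianization.of (kerPart hs m), .ofAdd (ofNeOne a.base - ofNeOne b.base)) := rfl

section Lift

variable {B : Type*} [CommGroup B] (Ψ : PullbackCover φ ⥤ GroupAsGroupoid B)

noncomputable def totAbLift : TotAb φ →* B :=
  (Abelianization.lift (.mk' (fun n => toGrp (Ψ.map (kerLoop φ n)))
      fun n n' => toGrp_map_comp_s15 Ψ (kerLoop φ n) (kerLoop φ n'))).coprod
    (AddMonoidHom.toMultiplicativeLeft (FreeAbelianGroup.lift fun g =>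
      Additive.ofMul (toGrp (Ψ.map (treeHom hs g.1)))))

lemma totAbLift_kerLoop (n : φ.ker) :
    totAbLift hs Ψ (Abelianization.of n, 1) = toGrp (Ψ.map (kerLoop φ n)) := by
  simp [totAbLift]
  rfl

include hs1 in
lemma totAbLift_ofNeOne (g : G) :
    totAbLift hs Ψ (1, .ofAdd (ofNeOne g)) = toGrp (Ψ.map (treeHom hs g)) := by
  by_cases hg : g = 1
  · subst hg
    rw [ofNeOne_one, ofAdd_zero, treeHom_one hs hs1, toGrp_map_id_s15]
    exact map_one _
  · simp [totAbLift, ofNeOne_of_ne hg]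

include hs1 in
lemma totAbLift_map {a b : PullbackCover φ} (m : a ⟶ b) :
    totAbLift hs Ψ (toGrp ((toTotAb hs).map m)) = toGrp (Ψ.map m) := by
  have hsquare := congrArg (fun m => toGrp (Ψ.map m)) (comp_treeHom hs m)
  simp only [toGrp_map_comp_s15] at hsquare
  have hsplit : toGrp ((toTotAb hs).map m) =
      (Abelianization.of (kerPart hs m), 1) * (1, .ofAdd (ofNeOne a.base)) *
        (1, .ofAdd (ofNeOne b.base))⁻¹ := by
    rw [toGrp_toTotAb_map, sub_eq_add_neg, ofAdd_add, ofAdd_neg]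
    simp
  rw [hsplit, map_mul, map_mul, map_inv, totAbLift_kerLoop, totAbLift_ofNeOne hs hs1,
    totAbLift_ofNeOne hs hs1, mul_inv_eq_iff_eq_mul, hsquare, mul_comm]

end Lift

include hs1 in
lemma totAb_hom_ext {B : Type*} [CommGroup B] {f₁ f₂ : TotAb φ →* B}
    (h : ∀ {a b : PullbackCover φ} (m : a ⟶ b),
      f₁ (toGrp ((toTotAb hs).map m)) = f₂ (toGrp ((toTotAb hs).map m))) :
    f₁ = f₂ := by
  rw [← MonoidHom.coprod_unique f₁, ← MonoidHom.coprod_unique f₂]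
  congr 1
  · refine Abelianization.hom_ext _ _ (MonoidHom.ext fun n => ?_)
    simpa [toGrp_toTotAb_map, kerPart_kerLoop hs hs1] using h (kerLoop φ n)
  · refine AddMonoidHom.toMultiplicativeLeft.symm.injective
      (FreeAbelianGroup.lift_ext _ _ fun g => ?_)
    simpa [toGrp_toTotAb_map, kerPart_treeHom hs hs1, ofNeOne_one, ofNeOne_of_ne g.2]
      using h (treeHom hs g.1)

end PullbackCover

section AugmentationIdeal

variable (G)

noncomputable def freeNeOneToIG : FreeAbelianGroup {g : G // g ≠ 1} →+ IG G :=
  FreeAbelianGroup.lift fun g => ⟨eAug G g.1, eAug_mem G g.1⟩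

lemma freeNeOneToIG_of (g : {g : G // g ≠ 1}) :
    freeNeOneToIG G (FreeAbelianGroup.of g) = ⟨eAug G g.1, eAug_mem G g.1⟩ :=
  FreeAbelianGroup.lift_apply_of _ _

noncomputable def monoidAlgebraToFreeNeOne :
    MonoidAlgebra ℤ G →+ FreeAbelianGroup {g : G // g ≠ 1} :=
  (Finsupp.liftAddHom fun g => zmultiplesHom _ (ofNeOne g)).comp
    MonoidAlgebra.coeffAddEquiv.toAddMonoidHom

lemma monoidAlgebraToFreeNeOne_single (g : G) (n : ℤ) :
    monoidAlgebraToFreeNeOne G (single g n) = n • ofNeOne g :=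
  Finsupp.liftAddHom_apply_single _ _ _

lemma freeNeOneToIG_monoidAlgebraToFreeNeOne (x : MonoidAlgebra ℤ G) :
    (freeNeOneToIG G (monoidAlgebraToFreeNeOne G x) : MonoidAlgebra ℤ G) =
      x - augM G x • 1 := by
  induction x using MonoidAlgebra.induction_linear with
  | zero => simp
  | add x y hx hy => rw [map_add, map_add, AddSubgroup.coe_add, hx, hy, map_add, add_smul,
      sub_add_sub_comm]
  | single g n =>
    rw [monoidAlgebraToFreeNeOne_single]
    by_cases hg : g = 1
    · subst hg
      simp [ofNeOne_one, augM, one_def, smul_single]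
    · rw [ofNeOne_of_ne hg, map_zsmul, freeNeOneToIG_of]
      simp [eAug, augM, one_def, of_apply, smul_single, smul_sub]

noncomputable def freeNeOneEquivIG : FreeAbelianGroup {g : G // g ≠ 1} ≃+ IG G :=
  AddMonoidHom.toAddEquiv (freeNeOneToIG G) ((monoidAlgebraToFreeNeOne G).comp (IG G).subtype)
    (FreeAbelianGroup.lift_ext _ _ fun g => by
      simp [freeNeOneToIG_of, eAug, of_apply, one_def, monoidAlgebraToFreeNeOne_single,
        ofNeOne_one, ofNeOne_of_ne g.2])
    (AddMonoidHom.ext fun x => Subtype.ext <| by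
      simpa [show augM G x = 0 from x.2] using freeNeOneToIG_monoidAlgebraToFreeNeOne G x)

lemma eAug_mul (h g : G) :
    eAug G (h * g) = eAug G h * MonoidAlgebra.of ℤ G g + eAug G g := by
  simp only [eAug, map_mul, sub_mul, one_mul]
  abel

end AugmentationIdeal

/-- if `φ : F → G` is surjective with kernel `N` and `F̂` is the pullback of
the universal covering groupoid of `G` along `φ`, then the universal abelianisation
`F̂^totab` is isomorphic to `N^ab ⊕ A`, where `A` is the free abelian group on `G \ {1}`;
moreover `A` is isomorphic as a `G`-module to the augmentation ideal `IG`, the basis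
element at `g` corresponding to `g - 1` (so that `hg - 1 = (h - 1)·g + (g - 1)` matches
the `G`-action on `A`). -/
theorem stmt15 (φ : F →* G) (hφ : Function.Surjective φ)
    -- (T, υ) is the universal abelianisation of F̂:
    (T : Type (max u v)) [CommGroup T] (υ : PullbackCover φ ⥤ GroupAsGroupoid T)
    (huniv : ∀ (A : Type (max u v)) (_ : CommGroup A)
      (Φ : PullbackCover φ ⥤ GroupAsGroupoid A),
      ∃! f : T →* A, ∀ {a b : PullbackCover φ} (m : a ⟶ b),
        toGrp (Φ.map m) = f (toGrp (υ.map m))) :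
    Nonempty (T ≃* Abelianization φ.ker ×
        Multiplicative (FreeAbelianGroup {g : G // g ≠ 1})) ∧
    (∃ θ : FreeAbelianGroup {g : G // g ≠ 1} ≃+ IG G,
      ∀ g : {g : G // g ≠ 1},
        θ (FreeAbelianGroup.of g) = ⟨eAug G g.1, eAug_mem G g.1⟩) ∧
    (∀ h g : G, eAug G (h * g) = eAug G h * MonoidAlgebra.of ℤ G g + eAug G g) := by
  refine ⟨?_, ⟨freeNeOneEquivIG G, freeNeOneToIG_of G⟩, eAug_mul G⟩
  obtain ⟨s, hs, hs1⟩ := exists_section_map_one hφ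
  exact IsTotAb.nonempty_mulEquiv huniv (PullbackCover.toTotAb hs)
    (PullbackCover.totAbLift hs υ) (PullbackCover.totAbLift_map hs hs1 υ)
    fun _ hf => PullbackCover.totAb_hom_ext hs hs1 hf
end
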